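/- arXiv:1501.02877 — 2 statements merged into one kernel-verified Lean document; each statement's English description precedes it below -/
import Mathlib

section
/- Every regular topological space X satisfies w(X) ≤ 2^{d(X)}, where d(X) is the density character of X. -/
open Cardinal TopologicalSpace

/-- The weight of a topological space: the minimal cardinality of a base. -/
noncomputable def tweight (X : Type u) [TopologicalSpace X] : Cardinal.{u} :=
  sInf {c : Cardinal.{u} | ∃ B : Set (Set X), IsTopologicalBasis B ∧ #B = c}

/-- The density character of a topological space: the minimal cardinality of a dense subset. -/
noncomputable def tdensity (X : Type u) [TopologicalSpace X] : Cardinal.{u} :=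
  sInf {c : Cardinal.{u} | ∃ s : Set X, Dense s ∧ #s = c}

/-!
In a regular space every point has a neighbourhood base of closed neighbourhoods `t`, and for a
dense set `s` the regular open set `interior (closure (interior t ∩ s))` lies between the
point and `t`. Hence the sets `interior (closure A)` with `A ⊆ s` form a base, and there are at
most `2 ^ #s` of them.
-/

section

variable {X : Type u} [TopologicalSpace X]

theorem tweight_le_mk {B : Set (Set X)} (hB : IsTopologicalBasis B) : tweight X ≤ #B :=
  csInf_le' ⟨B, hB, rfl⟩

theorem exists_dense_mk_eq_tdensity : ∃ s : Set X, Dense s ∧ #s = tdensity X :=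
  csInf_mem (⟨#(Set.univ : Set X), Set.univ, dense_univ, rfl⟩ :
    {c : Cardinal.{u} | ∃ s : Set X, Dense s ∧ #s = c}.Nonempty)

theorem Dense.subset_interior_closure_inter {s U : Set X} (hs : Dense s) (hU : IsOpen U) :
    U ⊆ interior (closure (U ∩ s)) :=
  interior_maximal (hs.open_subset_closure_inter hU) hU

theorem Dense.isTopologicalBasis_interior_closure [RegularSpace X] {s : Set X} (hs : Dense s) :
    IsTopologicalBasis ((fun A : Set X => interior (closure A)) '' 𝒫 s) := by
  refine isTopologicalBasis_of_isOpen_of_nhds ?_ fun x u hx hu => ?_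
  · rintro _ ⟨A, -, rfl⟩
    exact isOpen_interior
  obtain ⟨t, ht, htc, htu⟩ := exists_mem_nhds_isClosed_subset (hu.mem_nhds hx)
  refine ⟨_, ⟨interior t ∩ s, Set.inter_subset_right, rfl⟩, ?_, ?_⟩
  · exact hs.subset_interior_closure_inter isOpen_interior (mem_interior_iff_mem_nhds.mpr ht)
  · calc interior (closure (interior t ∩ s)) ⊆ closure t :=
          interior_subset.trans (closure_mono (Set.inter_subset_left.trans interior_subset))
      _ = t := htc.closure_eq
      _ ⊆ u := htu

end

/-- Every regular (T₃) space `X` satisfies `w(X) ≤ 2 ^ d(X)`. -/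
theorem weight_le_two_pow_density (X : Type u) [TopologicalSpace X] [T3Space X] :
    tweight X ≤ 2 ^ tdensity X := by
  obtain ⟨s, hs, hcard⟩ := exists_dense_mk_eq_tdensity (X := X)
  calc tweight X ≤ #((fun A : Set X => interior (closure A)) '' 𝒫 s) :=
        tweight_le_mk hs.isTopologicalBasis_interior_closure
    _ ≤ #(𝒫 s) := mk_image_le
    _ = 2 ^ tdensity X := by rw [mk_powerset, hcard]
end

section
/- If a first-countable (e.g., metrizable) topological group G is a subgroup of a topological group X of countable cellularity, then G has a countable base and hence is separable. -/
/-!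
By Zorn's lemma there is a maximal family `M` of points whose translates `m • V` of a nonempty
open set `V` are pairwise disjoint. Countable cellularity makes `M` countable, and maximality
gives `M * (V * V⁻¹) = univ`, so a group of countable cellularity is ω-narrow. Narrowness passes
to a subgroup `G` by choosing one point of `G` in each translate that meets it. In a first
countable ω-narrow group, the union of the countable sets whose translates of the members of a
countable neighbourhood base of `1` cover the group is dense, and a separable group whose
uniformity is countably generated is second countable.
-/

open TopologicalSpace

/-- A space has countable cellularity if every pairwise disjoint family of nonempty
open sets is countable. -/
def CountableCellularity (X : Type u) [TopologicalSpace X] : Prop :=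
  ∀ S : Set (Set X), (∀ U ∈ S, IsOpen U ∧ U.Nonempty) → S.PairwiseDisjoint id → S.Countable

open Filter Set Pointwise Topology

def OmegaNarrow (G : Type*) [Group G] [TopologicalSpace G] : Prop :=
  ∀ U ∈ 𝓝 (1 : G), ∃ s : Set G, s.Countable ∧ s * U = univ

theorem Set.exists_maximal_pairwiseDisjoint {ι α : Type*} [PartialOrder α] [OrderBot α]
    (f : ι → α) : ∃ M : Set ι, Maximal (fun t => t.PairwiseDisjoint f) M :=
  zorn_subset _ fun c hc hchain =>
    ⟨⋃₀ c, (hchain.pairwiseDisjoint_sUnion f).2 hc, fun _ => subset_sUnion_of_mem⟩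

theorem CountableCellularity.countable_of_pairwiseDisjoint {X ι : Type*} [TopologicalSpace X]
    (hX : CountableCellularity X) {s : ι → Set X} {a : Set ι} (hd : a.PairwiseDisjoint s)
    (ho : ∀ i ∈ a, IsOpen (s i)) (hne : ∀ i ∈ a, (s i).Nonempty) : a.Countable := by
  have hinj : InjOn s a := fun i hi j hj hij =>
    let ⟨x, hx⟩ := hne i hi
    hd.elim_set hi hj x hx (hij ▸ hx)
  refine countable_of_injective_of_countable_image hinj
    (hX _ ?_ (hinj.pairwiseDisjoint_image.2 hd))
  rintro _ ⟨i, hi, rfl⟩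
  exact ⟨ho i hi, hne i hi⟩

theorem CountableCellularity.exists_countable_mul_mul_inv_eq_univ {X : Type*} [Group X]
    [TopologicalSpace X] [ContinuousMul X] (hX : CountableCellularity X) {V : Set X}
    (hVo : IsOpen V) (hVne : V.Nonempty) : ∃ s : Set X, s.Countable ∧ s * (V * V⁻¹) = univ := by
  obtain ⟨M, hM⟩ := Set.exists_maximal_pairwiseDisjoint (· • V : X → Set X)
  have hne : ∀ x : X, (x • V).Nonempty := fun x => hVne.smul_set
  refine ⟨M, hX.countable_of_pairwiseDisjoint hM.prop (fun x _ => hVo.smul x) (fun x _ => hne x),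
    eq_univ_of_forall fun x => ?_⟩
  obtain ⟨m, hm, hmx⟩ : ∃ m ∈ M, ¬Disjoint (x • V) (m • V) := by
    by_contra! h
    have hxM : x ∈ M := hM.mem_of_prop_insert (hM.prop.insert fun m hm _ => h m hm)
    exact (hne x).ne_empty (disjoint_self.1 (h x hxM))
  obtain ⟨_, ⟨v, hv, rfl⟩, w, hw, hwv⟩ := not_disjoint_iff.1 hmx
  refine ⟨m, hm, w * v⁻¹, mul_mem_mul hw (inv_mem_inv.2 hv), ?_⟩
  have hwv : m * w = x * v := hwv
  show m * (w * v⁻¹) = x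
  rw [← mul_assoc, hwv, mul_inv_cancel_right]

theorem CountableCellularity.omegaNarrow {X : Type*} [Group X] [TopologicalSpace X]
    [IsTopologicalGroup X] (hX : CountableCellularity X) : OmegaNarrow X := by
  intro U hU
  obtain ⟨V, hV, -, hVinv, hVU⟩ := exists_closed_nhds_one_inv_eq_mul_subset hU
  obtain ⟨s, hs, hcover⟩ := hX.exists_countable_mul_mul_inv_eq_univ isOpen_interior
    ⟨1, mem_interior_iff_mem_nhds.2 hV⟩
  refine ⟨s, hs, eq_univ_of_univ_subset ?_⟩
  rw [← hcover]
  refine mul_subset_mul_left ?_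
  calc interior V * (interior V)⁻¹ ⊆ V * V⁻¹ :=
        mul_subset_mul interior_subset (inv_subset_inv.2 interior_subset)
    _ = V * V := by rw [hVinv]
    _ ⊆ U := hVU

theorem OmegaNarrow.subgroup {X : Type*} [Group X] [TopologicalSpace X] [IsTopologicalGroup X]
    (hX : OmegaNarrow X) (G : Subgroup X) : OmegaNarrow G := by
  intro U hU
  obtain ⟨W, hW, hWU⟩ := (mem_nhds_subtype _ _ _).1 hU
  obtain ⟨V, hV, -, hVinv, hVW⟩ := exists_closed_nhds_one_inv_eq_mul_subset hW
  obtain ⟨s, hs, hcover⟩ := hX V hV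
  have hpick : ∀ a : X, ∃ g : G, (a • V ∩ G).Nonempty → (g : X) ∈ a • V := by
    intro a
    by_cases h : (a • V ∩ G).Nonempty
    · obtain ⟨x, hx, hxG⟩ := h
      exact ⟨⟨x, hxG⟩, fun _ => hx⟩
    · exact ⟨1, fun h' => absurd h' h⟩
  choose f hf using hpick
  refine ⟨f '' s, hs.image f, eq_univ_of_forall fun g => ?_⟩
  obtain ⟨a, ha, v, hv, hav⟩ : (g : X) ∈ s * V := hcover ▸ mem_univ _
  obtain ⟨w, hw, hwf⟩ := hf a ⟨g, ⟨v, hv, hav⟩, g.2⟩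
  have hdiff : (((f a)⁻¹ * g : G) : X) = w⁻¹ * v := by
    have hav : a * v = g := hav
    have hwf : a * w = f a := hwf
    simp only [Subgroup.coe_mul, Subgroup.coe_inv]
    rw [← hwf, ← hav]
    group
  refine ⟨f a, mem_image_of_mem f ha, (f a)⁻¹ * g, hWU ?_, mul_inv_cancel_left _ _⟩
  refine hVW ?_
  rw [hdiff]
  exact mul_mem_mul (hVinv ▸ inv_mem_inv.2 hw) hv

theorem OmegaNarrow.separableSpace {G : Type*} [Group G] [TopologicalSpace G]
    [IsTopologicalGroup G] [FirstCountableTopology G] (hG : OmegaNarrow G) : SeparableSpace G := by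
  obtain ⟨V, hV⟩ := (𝓝 (1 : G)).exists_antitone_basis
  choose s hs hcover using fun n => hG _ (inv_mem_nhds_one G (hV.mem n))
  refine ⟨⋃ n, s n, countable_iUnion hs, dense_iff_inter_open.2 fun U hU ⟨x, hx⟩ => ?_⟩
  obtain ⟨n, hn⟩ := hV.mem_iff.1 <|
    (hU.preimage (continuous_const_mul x)).mem_nhds (show x * 1 ∈ U by rwa [mul_one])
  obtain ⟨a, ha, y, hy, hay⟩ : x ∈ s n * (V n)⁻¹ := hcover n ▸ mem_univ x
  have hxa : x * y⁻¹ = a := by rw [← hay, mul_inv_cancel_right]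
  exact ⟨a, hxa ▸ hn hy, mem_iUnion.2 ⟨n, ha⟩⟩

theorem IsTopologicalGroup.secondCountableTopology_of_separable (G : Type*) [Group G]
    [TopologicalSpace G] [IsTopologicalGroup G] [FirstCountableTopology G] [SeparableSpace G] :
    SecondCountableTopology G :=
  letI := IsTopologicalGroup.rightUniformSpace G
  haveI : (uniformity G).IsCountablyGenerated := comap.isCountablyGenerated _ _
  UniformSpace.secondCountable_of_separable G

/-- A first-countable subgroup of a topological group of countable cellularity has a
countable base and hence is separable. -/
theorem secondCountable_of_firstCountable_subgroup (X : Type u) [Group X]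
    [TopologicalSpace X] [IsTopologicalGroup X] (hX : CountableCellularity X)
    (G : Subgroup X) [FirstCountableTopology G] :
    SecondCountableTopology G ∧ SeparableSpace G :=
  have : SeparableSpace G := (hX.omegaNarrow.subgroup G).separableSpace
  ⟨IsTopologicalGroup.secondCountableTopology_of_separable G, this⟩
end
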